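/- Let ⟨A,∧,∨,→,∼,1⟩ be a Nelson algebra. Then for all x,y in A: ∼(∼x∧y)↣(x↣y) = x↣y, where x↣y:=(x→y)∧(∼y→∼x). -/

import Mathlib

/-- A Nelson algebra ⟨A,∧,∨,→,∼,1⟩ of type (2,2,2,1,0). -/
structure NelsonAlgebra (A : Type*) where
  meet : A → A → A
  join : A → A → A
  imp : A → A → A
  neg : A → A
  one : A
  n1 : ∀ x y, meet x (join x y) = x
  n2 : ∀ x y z, meet x (join y z) = join (meet z x) (meet y x)
  n3 : ∀ x, neg (neg x) = x
  n4 : ∀ x y, neg (meet x y) = join (neg x) (neg y)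
  n5 : ∀ x y, meet x (neg x) = meet (meet x (neg x)) (join y (neg y))
  n6 : ∀ x, imp x x = one
  n7 : ∀ x y, meet x (imp x y) = meet x (join (neg x) y)
  n8 : ∀ x y z, imp (meet x y) z = imp x (imp y z)

/-- The weak implication x↣y := (x→y)∧(∼y→∼x). -/
def NelsonAlgebra.wimp {A : Type*} (N : NelsonAlgebra A) (x y : A) : A :=
  N.meet (N.imp x y) (N.imp (N.neg y) (N.neg x))

/-!
Axioms N1–N4 make `(A, ∧, ∨)` a distributive lattice. By N7, `x → y = 1` iff `x ≤ ∼x ∨ y`, and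
with the Kleene inequality N5 one gets `x ≤ y` as soon as `x → y = 1` and `∼y → ∼x = 1`. This
yields `a → b ≤ x → y` whenever `x ≤ a` and `b ≤ x → y`. For `a = ∼(∼x ∧ y) = x ∨ ∼y` and
`b = x ↣ y` it gives `a → b ≤ x → y` and `a → b ≤ ∼y → ∼x`, so `a → b ≤ b`; since `b ≤ a → b` and
`b ≤ ∼b → ∼a` hold in general, `a ↣ b = b`.
-/

theorem le_of_le_sup_of_inf_le {α : Type*} [DistribLattice α] {x y z : α} (h₁ : x ≤ y ⊔ z)
    (h₂ : x ⊓ y ≤ z) : x ≤ z :=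
  calc x = x ⊓ (y ⊔ z) := (inf_eq_left.mpr h₁).symm
    _ = x ⊓ y ⊔ x ⊓ z := inf_sup_left x y z
    _ ≤ z := sup_le h₂ inf_le_right

namespace NelsonAlgebra

variable {A : Type*} (N : NelsonAlgebra A)

theorem join_meet_self_meet_self (x : A) : N.join (N.meet x x) (N.meet x x) = x :=
  (N.n2 x x x).symm.trans (N.n1 x x)

theorem meet_self (x : A) : N.meet x x = x := by
  have h := N.n1 (N.meet x x) (N.meet x x)
  rw [join_meet_self_meet_self] at h
  calc N.meet x x = N.meet x (N.join (N.meet x x) (N.meet x x)) := by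
        rw [join_meet_self_meet_self]
    _ = N.join (N.meet (N.meet x x) x) (N.meet (N.meet x x) x) := N.n2 _ _ _
    _ = x := by rw [h, join_meet_self_meet_self]

theorem join_self (x : A) : N.join x x = x := by
  simpa only [meet_self] using N.join_meet_self_meet_self x

theorem meet_comm (x y : A) : N.meet x y = N.meet y x := by
  simpa only [join_self] using N.n2 x y y

theorem join_eq_neg_meet_neg (x y : A) : N.join x y = N.neg (N.meet (N.neg x) (N.neg y)) := by
  rw [N.n4, N.n3, N.n3]

theorem neg_join (x y : A) : N.neg (N.join x y) = N.meet (N.neg x) (N.neg y) := by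
  rw [join_eq_neg_meet_neg, N.n3]

theorem join_comm (x y : A) : N.join x y = N.join y x := by
  rw [join_eq_neg_meet_neg, meet_comm, ← join_eq_neg_meet_neg]

theorem meet_join_distrib (x y z : A) :
    N.meet x (N.join y z) = N.join (N.meet x y) (N.meet x z) := by
  rw [N.n2, N.meet_comm z, N.meet_comm y, join_comm]

theorem join_meet_self (x y : A) : N.join x (N.meet x y) = x := by
  simpa only [N.n1, meet_self, join_comm, meet_comm] using (N.n2 x x y).symm

theorem join_meet_distrib (x y z : A) :
    N.join x (N.meet y z) = N.meet (N.join x y) (N.join x z) := by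
  rw [N.join_eq_neg_meet_neg x, N.n4 y z, meet_join_distrib, neg_join, ← join_eq_neg_meet_neg,
    ← join_eq_neg_meet_neg]

theorem join_eq_right_of_meet_eq_left {x y : A} (h : N.meet x y = x) : N.join x y = y := by
  rw [← h, join_comm, meet_comm, join_meet_self]

theorem meet_eq_left_of_join_eq_right {x y : A} (h : N.join x y = y) : N.meet x y = x := by
  rw [← h, N.n1]

theorem meet_meet_right_self (x y : A) : N.meet (N.meet x y) y = N.meet x y :=
  N.meet_eq_left_of_join_eq_right (by rw [join_comm, meet_comm, join_meet_self])

theorem meet_meet_left_self (x y : A) : N.meet (N.meet x y) x = N.meet x y := by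
  rw [N.meet_comm x y, meet_meet_right_self]

theorem meet_eq_left_trans {x y z : A} (hxy : N.meet x y = x) (hyz : N.meet y z = y) :
    N.meet x z = x := by
  apply meet_eq_left_of_join_eq_right
  rw [← hxy, join_comm, join_meet_distrib, N.join_comm z y, join_eq_right_of_meet_eq_left N hyz,
    meet_comm, N.n1]

theorem meet_eq_left_meet {x y z : A} (hxy : N.meet x y = x) (hxz : N.meet x z = x) :
    N.meet x (N.meet y z) = x := by
  apply meet_eq_left_of_join_eq_right
  rw [join_meet_distrib, join_eq_right_of_meet_eq_left N hxy, join_eq_right_of_meet_eq_left N hxz]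

theorem meet_assoc (x y z : A) : N.meet (N.meet x y) z = N.meet x (N.meet y z) := by
  set l := N.meet (N.meet x y) z
  set r := N.meet x (N.meet y z)
  -- `l` and `r` are lower bounds of each other for the order `u ≤ v ↔ N.meet u v = u`.
  have hlxy : N.meet l (N.meet x y) = l := meet_meet_left_self N _ _
  have hryz : N.meet r (N.meet y z) = r := meet_meet_right_self N _ _
  have hlr : N.meet l r = l :=
    N.meet_eq_left_meet (N.meet_eq_left_trans hlxy (N.meet_meet_left_self x y))
      (N.meet_eq_left_meet (N.meet_eq_left_trans hlxy (N.meet_meet_right_self x y))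
        (N.meet_meet_right_self _ z))
  have hrl : N.meet r l = r :=
    N.meet_eq_left_meet
      (N.meet_eq_left_meet (N.meet_meet_left_self x _)
        (N.meet_eq_left_trans hryz (N.meet_meet_left_self y z)))
      (N.meet_eq_left_trans hryz (N.meet_meet_right_self y z))
  rw [← hlr, meet_comm, hrl]

theorem join_assoc (x y z : A) : N.join (N.join x y) z = N.join x (N.join y z) := by
  rw [N.join_eq_neg_meet_neg (N.join x y), neg_join, meet_assoc, ← neg_join,
    ← join_eq_neg_meet_neg]

/-- `A` with the distributive lattice structure of `N`; a synonym is needed because `N` is data,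
not an instance. -/
def Carrier (_N : NelsonAlgebra A) : Type _ := A

instance : Lattice N.Carrier :=
  @Lattice.mk' _ ⟨N.join⟩ ⟨N.meet⟩ N.join_comm N.join_assoc N.meet_comm N.meet_assoc
    N.join_meet_self N.n1

instance : DistribLattice N.Carrier :=
  .ofInfSupLe fun x y z => le_of_eq (N.meet_join_distrib x y z)

instance : One N.Carrier := ⟨N.one⟩

namespace Carrier

variable {N}

def neg (x : N.Carrier) : N.Carrier := N.neg x

def imp (x y : N.Carrier) : N.Carrier := N.imp x y

local prefix:max "∼" => neg
local infixr:60 " ⇒ " => imp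

protected theorem neg_neg (x : N.Carrier) : ∼∼x = x := N.n3 x

theorem neg_inf (x y : N.Carrier) : ∼(x ⊓ y) = ∼x ⊔ ∼y := N.n4 x y

theorem neg_sup (x y : N.Carrier) : ∼(x ⊔ y) = ∼x ⊓ ∼y := N.neg_join x y

theorem inf_neg_le_sup_neg (x y : N.Carrier) : x ⊓ ∼x ≤ y ⊔ ∼y :=
  inf_eq_left.mp (N.n5 x y).symm

protected theorem imp_self (x : N.Carrier) : x ⇒ x = 1 := N.n6 x

theorem inf_imp (x y : N.Carrier) : x ⊓ (x ⇒ y) = x ⊓ (∼x ⊔ y) := N.n7 x y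

theorem imp_imp (x y z : N.Carrier) : x ⇒ (y ⇒ z) = (x ⊓ y) ⇒ z := (N.n8 x y z).symm

theorem neg_le_neg {x y : N.Carrier} (h : x ≤ y) : ∼y ≤ ∼x := by
  rw [← inf_eq_left, ← neg_sup, sup_eq_left.mpr h]

theorem le_one (x : N.Carrier) : x ≤ 1 := by
  have h := inf_imp x x
  rw [Carrier.imp_self, inf_eq_left.mpr (le_sup_right : x ≤ ∼x ⊔ x)] at h
  exact inf_eq_left.mp h

theorem imp_eq_one_iff {x y : N.Carrier} : x ⇒ y = 1 ↔ x ≤ ∼x ⊔ y := by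
  rw [← inf_eq_left, ← inf_imp]
  constructor
  · intro h
    rw [h, inf_eq_left]
    exact le_one x
  · intro h
    rw [← Carrier.imp_self (x ⇒ y)]
    conv_rhs => rw [imp_imp, inf_comm, h]

theorem imp_eq_one_of_le {x y : N.Carrier} (h : x ≤ y) : x ⇒ y = 1 :=
  imp_eq_one_iff.mpr (h.trans le_sup_right)

theorem le_of_imp_eq_one_of_inf_neg_le {x y : N.Carrier} (h₁ : x ⇒ y = 1) (h₂ : x ⊓ ∼x ≤ y) :
    x ≤ y :=
  le_of_le_sup_of_inf_le (imp_eq_one_iff.mp h₁) h₂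

theorem inf_neg_self_le {x y z : N.Carrier} (h₁ : x ⊓ y ≤ z) (h₂ : x ⊓ ∼y ≤ z) : x ⊓ ∼x ≤ z :=
  calc x ⊓ ∼x ≤ x ⊓ (y ⊔ ∼y) := le_inf inf_le_left (inf_neg_le_sup_neg x y)
    _ = x ⊓ y ⊔ x ⊓ ∼y := inf_sup_left x y (∼y)
    _ ≤ z := sup_le h₁ h₂

theorem inf_le_imp_of_le_neg_sup {x y z : N.Carrier} (h : z ≤ ∼x ⊔ y) : x ⊓ z ≤ x ⇒ y :=
  calc x ⊓ z ≤ x ⊓ (∼x ⊔ y) := inf_le_inf_left x h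
    _ = x ⊓ (x ⇒ y) := (inf_imp x y).symm
    _ ≤ x ⇒ y := inf_le_right

theorem neg_le_imp (x y : N.Carrier) : ∼x ≤ x ⇒ y := by
  refine le_of_imp_eq_one_of_inf_neg_le ?_ ?_
  · rw [imp_imp, imp_eq_one_iff, neg_inf, Carrier.neg_neg]
    exact le_sup_of_le_left (inf_le_right.trans le_sup_left)
  · rw [Carrier.neg_neg, inf_comm]
    exact inf_le_imp_of_le_neg_sup le_sup_left

theorem le_imp (x y : N.Carrier) : y ≤ x ⇒ y := by
  refine le_of_imp_eq_one_of_inf_neg_le ?_ (inf_neg_self_le (y := x) ?_ ?_)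
  · rw [imp_imp]
    exact imp_eq_one_of_le inf_le_left
  · rw [inf_comm]
    exact inf_le_imp_of_le_neg_sup le_sup_right
  · exact inf_le_right.trans (neg_le_imp x y)

theorem le_of_imp_eq_one_of_neg_imp_eq_one {x y : N.Carrier} (h₁ : x ⇒ y = 1)
    (h₂ : ∼y ⇒ ∼x = 1) : x ≤ y := by
  refine le_of_imp_eq_one_of_inf_neg_le h₁ (inf_neg_self_le (y := y) inf_le_right ?_)
  have h := neg_le_neg (imp_eq_one_iff.mp h₂)
  rwa [neg_sup, Carrier.neg_neg, Carrier.neg_neg, Carrier.neg_neg, inf_comm] at h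

theorem inf_neg_le_neg_sup_neg_imp (x y : N.Carrier) : x ⊓ ∼y ≤ ∼x ⊔ ∼(x ⇒ y) := by
  rw [← neg_inf, inf_imp, neg_inf, neg_sup, Carrier.neg_neg]
  exact le_sup_right

theorem inf_imp_le (x y : N.Carrier) : x ⊓ (x ⇒ y) ≤ ∼x ⊔ y :=
  (inf_imp x y).trans_le inf_le_right

theorem imp_imp_imp_eq_one_of_le {a b x y : N.Carrier} (hxa : x ≤ a) (hb : b ≤ x ⇒ y) :
    (a ⇒ b) ⇒ (x ⇒ y) = 1 := by
  rw [imp_imp, imp_eq_one_iff, neg_inf]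
  refine le_trans ?_ (sup_le_sup_right le_sup_right y)
  have h : (a ⇒ b) ⊓ x ≤ ∼a ⊔ b := by
    rw [inf_comm]
    exact (inf_le_inf_right _ hxa).trans (inf_imp_le a b)
  calc (a ⇒ b) ⊓ x ≤ x ⊓ (∼a ⊔ b) := le_inf inf_le_right h
    _ = x ⊓ ∼a ⊔ x ⊓ b := inf_sup_left x (∼a) b
    _ ≤ ∼x ⊔ y := sup_le (inf_le_right.trans ((neg_le_neg hxa).trans le_sup_left))
        ((inf_le_inf_left x hb).trans (inf_imp_le x y))

theorem neg_imp_imp_neg_imp_eq_one_of_le {a b x y : N.Carrier} (hxa : x ≤ a)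
    (hb : b ≤ x ⇒ y) : ∼(x ⇒ y) ⇒ ∼(a ⇒ b) = 1 := by
  rw [imp_eq_one_iff, Carrier.neg_neg]
  have hx : ∼(x ⇒ y) ≤ x := by simpa only [Carrier.neg_neg] using neg_le_neg (neg_le_imp x y)
  have hab : ∼(x ⇒ y) ≤ ∼a ⊔ ∼(a ⇒ b) :=
    (le_inf (hx.trans hxa) (neg_le_neg hb)).trans (inf_neg_le_neg_sup_neg_imp a b)
  refine le_of_le_sup_of_inf_le (hab.trans (sup_le_sup_left le_sup_right _)) ?_
  exact inf_le_right.trans ((neg_le_neg hxa).trans ((neg_le_imp x y).trans le_sup_left))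

theorem imp_le_imp_of_le {a b x y : N.Carrier} (hxa : x ≤ a) (hb : b ≤ x ⇒ y) :
    a ⇒ b ≤ x ⇒ y :=
  le_of_imp_eq_one_of_neg_imp_eq_one (imp_imp_imp_eq_one_of_le hxa hb)
    (neg_imp_imp_neg_imp_eq_one_of_le hxa hb)

theorem wimp_eq_right_of_imp_le {a b : N.Carrier} (h : a ⇒ b ≤ b) : N.wimp a b = b := by
  change (a ⇒ b) ⊓ (∼b ⇒ ∼a) = b
  refine le_antisymm (inf_le_left.trans h) (le_inf (le_imp a b) ?_)
  simpa only [Carrier.neg_neg] using neg_le_imp (∼b) (∼a)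

end Carrier

end NelsonAlgebra

theorem nelson_B7 {A : Type*} (N : NelsonAlgebra A) (x y : A) :
    N.wimp (N.neg (N.meet (N.neg x) y)) (N.wimp x y) = N.wimp x y := by
  rw [N.n4, N.n3]
  open NelsonAlgebra.Carrier in
  exact wimp_eq_right_of_imp_le <|
    le_inf (imp_le_imp_of_le le_sup_left inf_le_left) (imp_le_imp_of_le le_sup_right inf_le_right)
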